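/- The function d(p,q) = H(p) + H(q) − 2H(p ∨ q) on δ_N satisfies the triangle inequality: d(p,r) + d(r,q) ≥ d(p,q) for all p, q, r ∈ δ_N. -/

import Mathlib

open Finset

/-- Partial sum of the first `l` components of `p`. -/
def PartSum {N : ℕ} (p : Fin N → ℝ) (l : ℕ) : ℝ := ∑ i : Fin N, if (i : ℕ) < l then p i else 0

/-- `p` is a probability vector sorted in decreasing order (an element of δ_N). -/
def IsDecProb {N : ℕ} (p : Fin N → ℝ) : Prop :=
  (∀ i, 0 ≤ p i) ∧ (∀ i j : Fin N, i ≤ j → p j ≤ p i) ∧ ∑ i, p i = 1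

/-- `p ≺ q` : every partial sum of `p` is at most the corresponding partial sum of `q`. -/
def Maj {N : ℕ} (p q : Fin N → ℝ) : Prop := ∀ l : ℕ, PartSum p l ≤ PartSum q l

/-- `s` is the supremum of `p` and `q` in the majorization lattice. -/
def IsSup {N : ℕ} (s p q : Fin N → ℝ) : Prop :=
  IsDecProb s ∧ Maj p s ∧ Maj q s ∧ ∀ t, IsDecProb t → Maj p t → Maj q t → Maj s t

/-- `s` is the infimum of `p` and `q` in the majorization lattice. -/
def IsInf {N : ℕ} (s p q : Fin N → ℝ) : Prop :=
  IsDecProb s ∧ Maj s p ∧ Maj s q ∧ ∀ t, IsDecProb t → Maj t p → Maj t q → Maj t s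

/-- Shannon entropy. -/
noncomputable def H {N : ℕ} (p : Fin N → ℝ) : ℝ := -∑ i, p i * Real.log (p i)

/-!
Let `S` and `T` be the partial-sum sequences of `p ∨ r` and `r ∨ q`. Both are concave, hence so is
`min S T`, which is therefore the partial-sum sequence of a sorted vector `m` with `r ≺ m`. The
sequence `max S T` is the partial-sum sequence of a possibly unsorted vector `M`; its decreasing
rearrangement majorizes `p` and `q`, hence `p ∨ q`. Coordinatewise `m i + M i` equals
`(p ∨ r) i + (r ∨ q) i`, with `m i` between the two summands, so concavity of `-x log x` gives
`H (p ∨ r) + H (r ∨ q) ≤ H m + H M`, while Schur concavity gives `H m ≤ H r` and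
`H M ≤ H (p ∨ q)`; the triangle inequality is a rearrangement of the resulting bound.
-/

open Real

section

variable {N : ℕ}

def zeroExtend (p : Fin N → ℝ) (i : ℕ) : ℝ := if h : i < N then p ⟨i, h⟩ else 0

def ofPartSums (F : ℕ → ℝ) : Fin N → ℝ := fun i => F (i + 1) - F i

@[simp]
lemma zeroExtend_val (p : Fin N → ℝ) (i : Fin N) : zeroExtend p i = p i := by
  simp [zeroExtend]

lemma zeroExtend_of_le (p : Fin N → ℝ) {i : ℕ} (hi : N ≤ i) : zeroExtend p i = 0 :=
  dif_neg hi.not_gt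

lemma zeroExtend_nonneg {p : Fin N → ℝ} (hp : ∀ i, 0 ≤ p i) (i : ℕ) : 0 ≤ zeroExtend p i := by
  unfold zeroExtend
  split_ifs
  exacts [hp _, le_rfl]

lemma partSum_eq_sum_range_ite (p : Fin N → ℝ) (l : ℕ) :
    PartSum p l = ∑ i ∈ range N, if i < l then zeroExtend p i else 0 := by
  simp [PartSum, ← Fin.sum_univ_eq_sum_range (fun i => if i < l then zeroExtend p i else 0)]

@[simp]
lemma partSum_zero (p : Fin N → ℝ) : PartSum p 0 = 0 := by
  simp [PartSum]

lemma partSum_succ (p : Fin N → ℝ) (l : ℕ) :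
    PartSum p (l + 1) = PartSum p l + zeroExtend p l := by
  have hsplit : ∀ i, (if i < l + 1 then zeroExtend p i else 0)
      = (if i < l then zeroExtend p i else 0) + if l = i then zeroExtend p i else 0 := by
    intro i
    split_ifs <;> first | omega | simp_all
  rw [partSum_eq_sum_range_ite, partSum_eq_sum_range_ite, Finset.sum_congr rfl fun i _ => hsplit i,
    Finset.sum_add_distrib, Finset.sum_ite_eq]
  split_ifs with hl
  · rfl
  · rw [zeroExtend_of_le p (by simpa using hl)]

lemma partSum_eq_sum_range (p : Fin N → ℝ) (l : ℕ) :
    PartSum p l = ∑ i ∈ range l, zeroExtend p i := by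
  induction l with
  | zero => simp
  | succ l ih => rw [partSum_succ, Finset.sum_range_succ, ih]

lemma apply_eq_partSum_succ_sub (p : Fin N → ℝ) (i : Fin N) :
    p i = PartSum p (i + 1) - PartSum p i := by
  rw [partSum_succ, zeroExtend_val]
  ring

lemma partSum_of_le (p : Fin N → ℝ) {l : ℕ} (hl : N ≤ l) : PartSum p l = ∑ i, p i :=
  Finset.sum_congr rfl fun i _ => if_pos (i.2.trans_le hl)

lemma partSum_min (p : Fin N → ℝ) (l : ℕ) : PartSum p (min l N) = PartSum p l := by
  rcases le_total l N with hl | hl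
  · rw [min_eq_left hl]
  · rw [min_eq_right hl, partSum_of_le p le_rfl, partSum_of_le p hl]

lemma partSum_mono {p : Fin N → ℝ} (hp : ∀ i, 0 ≤ p i) : Monotone (PartSum p) := by
  refine monotone_nat_of_le_succ fun l => ?_
  rw [partSum_succ]
  exact le_add_of_nonneg_right (zeroExtend_nonneg hp l)

lemma partSum_le_sum {p : Fin N → ℝ} (hp : ∀ i, 0 ≤ p i) (l : ℕ) :
    PartSum p l ≤ ∑ i, p i := by
  rw [← partSum_min, ← partSum_of_le p le_rfl]
  exact partSum_mono hp (min_le_right l N)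

lemma maj_of_forall_le {p q : Fin N → ℝ} (h : ∀ l ≤ N, PartSum p l ≤ PartSum q l) :
    Maj p q := fun l => by
  simpa only [partSum_min] using h (min l N) (min_le_right l N)

lemma Maj.trans {p q r : Fin N → ℝ} (hpq : Maj p q) (hqr : Maj q r) : Maj p r :=
  fun l => (hpq l).trans (hqr l)

lemma partSum_ofPartSums {F : ℕ → ℝ} (hF : F 0 = 0) {l : ℕ} (hl : l ≤ N) :
    PartSum (ofPartSums (N := N) F) l = F l := by
  induction l with
  | zero => rw [partSum_zero, hF]
  | succ l ih =>
    rw [partSum_succ, ih (by omega), zeroExtend, dif_pos (by omega), ofPartSums]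
    ring

lemma sum_ofPartSums {F : ℕ → ℝ} (hF : F 0 = 0) : ∑ i, ofPartSums (N := N) F i = F N := by
  rw [← partSum_of_le _ le_rfl, partSum_ofPartSums hF le_rfl]

lemma ofPartSums_nonneg {F : ℕ → ℝ} (hF : Monotone F) (i : Fin N) : 0 ≤ ofPartSums F i :=
  sub_nonneg.2 (hF (Nat.le_succ i))

lemma antitone_ofPartSums {F : ℕ → ℝ} (hF : Antitone fun n => F (n + 1) - F n) :
    Antitone (ofPartSums (N := N) F) :=
  fun _ _ hij => hF (Fin.le_def.1 hij)

lemma antitone_succ_sub_inf {F G : ℕ → ℝ} (hF : Antitone fun n => F (n + 1) - F n)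
    (hG : Antitone fun n => G (n + 1) - G n) :
    Antitone fun n => (F ⊓ G) (n + 1) - (F ⊓ G) n := by
  refine antitone_nat_of_succ_le fun n => ?_
  have hF' := hF (Nat.le_succ n)
  have hG' := hG (Nat.le_succ n)
  simp only [Pi.inf_apply] at *
  rcases le_total (F (n + 1)) (G (n + 1)) with h | h
  · rw [min_eq_left h]
    linarith [min_le_left (F (n + 2)) (G (n + 2)), min_le_left (F n) (G n)]
  · rw [min_eq_right h]
    linarith [min_le_right (F (n + 2)) (G (n + 2)), min_le_right (F n) (G n)]

namespace IsDecProb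

variable {p : Fin N → ℝ}

lemma antitone_zeroExtend (hp : IsDecProb p) : Antitone (zeroExtend p) := by
  intro i j hij
  by_cases hj : j < N
  · rw [zeroExtend, dif_pos hj, zeroExtend, dif_pos (hij.trans_lt hj)]
    exact hp.2.1 _ _ (Fin.le_def.2 hij)
  · rw [zeroExtend_of_le p (not_lt.1 hj)]
    exact zeroExtend_nonneg hp.1 i

lemma antitone_partSum_succ_sub (hp : IsDecProb p) :
    Antitone fun n => PartSum p (n + 1) - PartSum p n := by
  simpa only [partSum_succ, add_sub_cancel_left] using hp.antitone_zeroExtend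

lemma partSum_eq_one_of_zeroExtend_eq_zero (hp : IsDecProb p) {l : ℕ}
    (hl : zeroExtend p l = 0) : PartSum p l = 1 := by
  rcases le_total N l with hNl | hlN
  · rw [partSum_of_le p hNl, hp.2.2]
  have htail : ∑ i ∈ Ico l N, zeroExtend p i = 0 :=
    Finset.sum_eq_zero fun i hi => le_antisymm
      (hl ▸ hp.antitone_zeroExtend (Finset.mem_Ico.1 hi).1) (zeroExtend_nonneg hp.1 i)
  rw [partSum_eq_sum_range, ← add_zero (∑ i ∈ range l, _), ← htail,
    Finset.sum_range_add_sum_Ico _ hlN, ← partSum_eq_sum_range, partSum_of_le p le_rfl, hp.2.2]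

end IsDecProb

lemma Real.negMulLog_le_negMulLog_sub_mul {a b : ℝ} (ha : 0 < a) (hb : 0 ≤ b) :
    negMulLog b ≤ negMulLog a - (log a + 1) * (b - a) := by
  rcases hb.eq_or_lt with rfl | hb
  · simp only [negMulLog]
    linarith
  have hlog : log (a / b) ≤ a / b - 1 := log_le_sub_one_of_pos (div_pos ha hb)
  rw [log_div ha.ne' hb.ne'] at hlog
  have hmul : b * (log a - log b) ≤ a - b := calc
    _ ≤ b * (a / b - 1) := by gcongr
    _ = a - b := by field_simp
  simp only [negMulLog]
  linarith

lemma H_eq_sum_negMulLog (p : Fin N → ℝ) : H p = ∑ i, negMulLog (p i) := by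
  simp [H, negMulLog, ← Finset.sum_neg_distrib]

lemma H_eq_sum_range (p : Fin N → ℝ) : H p = ∑ i ∈ range N, negMulLog (zeroExtend p i) := by
  simp [H_eq_sum_negMulLog, ← Fin.sum_univ_eq_sum_range]

/-- Tangent lines of `negMulLog` at the `p i` have slopes increasing in `i`; summing the tangent
bounds by parts against `PartSum q - PartSum p ≥ 0` gives the claim. -/
lemma IsDecProb.H_le_of_maj {p q : Fin N → ℝ} (hp : IsDecProb p) (hq0 : ∀ i, 0 ≤ q i)
    (hq1 : ∑ i, q i = 1) (hpq : Maj p q) : H q ≤ H p := by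
  set slope : ℕ → ℝ := fun i => -(log (zeroExtend p i) + 1)
  set D : ℕ → ℝ := fun l => PartSum q l - PartSum p l
  have hD0 : D 0 = 0 := by simp [D]
  have hDN : D N = 0 := by simp [D, partSum_of_le _ le_rfl, hq1, hp.2.2]
  have hD_eq_zero : ∀ l, zeroExtend p l = 0 → D l = 0 := fun l hl => by
    have hp1 := hp.partSum_eq_one_of_zeroExtend_eq_zero hl
    have hqle := partSum_le_sum hq0 l
    simp only [D]
    linarith [hpq l]
  have hincr : ∀ i, zeroExtend q i - zeroExtend p i = D (i + 1) - D i := fun i => by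
    simp only [D, partSum_succ]
    ring
  have htangent : ∀ i, negMulLog (zeroExtend q i) - negMulLog (zeroExtend p i)
      ≤ slope i * (D (i + 1) - D i) := fun i => by
    rw [← hincr]
    rcases (zeroExtend_nonneg hp.1 i).eq_or_lt with h | h
    · -- once `p` has run out of mass, so has `q`
      have hnext : zeroExtend p (i + 1) = 0 :=
        le_antisymm (h ▸ hp.antitone_zeroExtend (Nat.le_succ i)) (zeroExtend_nonneg hp.1 _)
      have := hincr i
      rw [hD_eq_zero i h.symm, hD_eq_zero _ hnext, ← h] at this
      rw [← h, show zeroExtend q i = 0 by linarith]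
      simp
    · linarith [negMulLog_le_negMulLog_sub_mul h (zeroExtend_nonneg hq0 i)]
  have hslope : ∀ i, 0 ≤ (slope (i + 1) - slope i) * D (i + 1) := fun i => by
    rcases (zeroExtend_nonneg hp.1 (i + 1)).eq_or_lt with h | h
    · rw [hD_eq_zero _ h.symm, mul_zero]
    · refine mul_nonneg ?_ (sub_nonneg.2 (hpq _))
      have := log_le_log h (hp.antitone_zeroExtend (Nat.le_succ i))
      simp only [slope]
      linarith
  calc H q = H p + ∑ i ∈ range N, (negMulLog (zeroExtend q i) - negMulLog (zeroExtend p i)) := by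
        rw [Finset.sum_sub_distrib, H_eq_sum_range, H_eq_sum_range]
        ring
    _ ≤ H p + ∑ i ∈ range N, slope i * (D (i + 1) - D i) := by
        gcongr with i
        exact htangent i
    _ = H p - ∑ i ∈ range (N - 1), (slope (i + 1) - slope i) * D (i + 1) := by
        have := Finset.sum_range_by_parts slope (fun i => D (i + 1) - D i) N
        simp only [smul_eq_mul, Finset.sum_range_sub, hD0, hDN, sub_zero, mul_zero, zero_sub] at this
        rw [this, sub_eq_add_neg]
    _ ≤ H p := sub_le_self _ (Finset.sum_nonneg fun i _ => hslope i)

lemma exists_antitone_comp_perm (c : Fin N → ℝ) : ∃ σ : Equiv.Perm (Fin N), Antitone (c ∘ σ) :=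
  ⟨Tuple.sort (OrderDual.toDual ∘ c), Tuple.monotone_sort (OrderDual.toDual ∘ c)⟩

lemma maj_comp_perm_of_antitone (c : Fin N → ℝ) {σ : Equiv.Perm (Fin N)} (hσ : Antitone (c ∘ σ)) :
    Maj c (c ∘ σ) := fun l => by
  set w : Fin N → ℝ := fun i => if (i : ℕ) < l then 1 else 0
  have hw : Antitone w := fun i j hij => by
    have : (i : ℕ) ≤ j := hij
    simp only [w]
    split_ifs <;> first | omega | norm_num
  have hpart : ∀ v : Fin N → ℝ, PartSum v l = ∑ i, w i • v i := fun v => by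
    simp [PartSum, w]
  -- rearrangement inequality: `c ∘ σ` is arranged like the weights `w`
  simpa [hpart] using (hw.monovary hσ).sum_smul_comp_perm_le_sum_smul (σ := σ⁻¹)

lemma H_comp_perm (c : Fin N → ℝ) (σ : Equiv.Perm (Fin N)) : H (c ∘ σ) = H c := by
  simp only [H, Function.comp_apply, Equiv.sum_comp σ (fun i => c i * log (c i))]

lemma isDecProb_comp_perm {c : Fin N → ℝ} (hc0 : ∀ i, 0 ≤ c i) (hc1 : ∑ i, c i = 1)
    {σ : Equiv.Perm (Fin N)} (hσ : Antitone (c ∘ σ)) : IsDecProb (c ∘ σ) :=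
  ⟨fun i => hc0 (σ i), fun _ _ hij => hσ hij, by rw [← hc1]; exact Equiv.sum_comp σ c⟩

lemma ConcaveOn.add_le_add_of_mem_uIcc {s : Set ℝ} {f : ℝ → ℝ} (hf : ConcaveOn ℝ s f)
    {x y u v : ℝ} (hx : x ∈ s) (hy : y ∈ s) (hu : u ∈ Set.uIcc x y) (huv : u + v = x + y) :
    f x + f y ≤ f u + f v := by
  wlog hxy : x ≤ y generalizing x y
  · rw [add_comm (f x)]
    exact this hy hx (Set.uIcc_comm x y ▸ hu) (by linarith) (le_of_not_ge hxy)
  rw [Set.uIcc_of_le hxy] at hu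
  rcases hxy.eq_or_lt with rfl | hlt
  · obtain rfl : u = x := le_antisymm hu.2 hu.1
    obtain rfl : v = u := by linarith
    rfl
  -- `u` and `v` are the convex combinations of `x, y` with swapped weights `1 - t, t`
  set t := (u - x) / (y - x)
  have ht0 : 0 ≤ t := div_nonneg (by linarith [hu.1]) (by linarith)
  have ht1 : t ≤ 1 := (div_le_one (by linarith)).2 (by linarith [hu.2])
  have hu' : (1 - t) • x + t • y = u := by
    simp only [smul_eq_mul, t]
    field_simp
    ring
  have hv' : t • x + (1 - t) • y = v := by
    simp only [smul_eq_mul, t, show v = x + y - u by linarith]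
    field_simp
    ring
  have h₁ := hf.2 hx hy (sub_nonneg.2 ht1) ht0 (by ring)
  have h₂ := hf.2 hx hy ht0 (sub_nonneg.2 ht1) (by ring)
  rw [hu'] at h₁
  rw [hv'] at h₂
  simp only [smul_eq_mul] at h₁ h₂
  linarith

lemma min_sub_min_mem_uIcc (a b c d : ℝ) : min a b - min c d ∈ Set.uIcc (a - c) (b - d) := by
  rcases le_total a b with h | h <;> rcases le_total c d with h' | h' <;>
    simp only [min_eq_left, min_eq_right, h, h']
  · exact Set.left_mem_uIcc
  · exact Set.mem_uIcc_of_le (by linarith) (by linarith)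
  · exact Set.mem_uIcc_of_ge (by linarith) (by linarith)
  · exact Set.right_mem_uIcc

def partSumInf (s t : Fin N → ℝ) : Fin N → ℝ := ofPartSums (PartSum s ⊓ PartSum t)

/-- Not sorted in general, so not the majorization supremum of `s` and `t`. -/
def partSumSup (s t : Fin N → ℝ) : Fin N → ℝ := ofPartSums (PartSum s ⊔ PartSum t)

lemma H_add_H_le {s t : Fin N → ℝ} (hs : ∀ i, 0 ≤ s i) (ht : ∀ i, 0 ≤ t i) :
    H s + H t ≤ H (partSumInf s t) + H (partSumSup s t) := by
  simp only [H_eq_sum_negMulLog, ← Finset.sum_add_distrib]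
  refine Finset.sum_le_sum fun i _ =>
    concaveOn_negMulLog.add_le_add_of_mem_uIcc (hs i) (ht i) ?_ ?_
  · rw [apply_eq_partSum_succ_sub s, apply_eq_partSum_succ_sub t]
    exact min_sub_min_mem_uIcc _ _ _ _
  · simp only [partSumInf, partSumSup, ofPartSums, Pi.inf_apply, Pi.sup_apply]
    rw [apply_eq_partSum_succ_sub s, apply_eq_partSum_succ_sub t]
    linarith [min_add_max (PartSum s (i + 1)) (PartSum t (i + 1)),
      min_add_max (PartSum s i) (PartSum t i)]

lemma maj_partSumInf {r s t : Fin N → ℝ} (hs : Maj r s) (ht : Maj r t) :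
    Maj r (partSumInf s t) :=
  maj_of_forall_le fun l hl => by
    rw [partSumInf, partSum_ofPartSums (by simp) hl]
    exact le_min (hs l) (ht l)

lemma maj_partSumSup_left (s t : Fin N → ℝ) : Maj s (partSumSup s t) :=
  maj_of_forall_le fun l hl => by
    rw [partSumSup, partSum_ofPartSums (by simp) hl]
    exact le_sup_left

lemma maj_partSumSup_right (s t : Fin N → ℝ) : Maj t (partSumSup s t) :=
  maj_of_forall_le fun l hl => by
    rw [partSumSup, partSum_ofPartSums (by simp) hl]
    exact le_sup_right

lemma isDecProb_partSumInf {s t : Fin N → ℝ} (hs : IsDecProb s) (ht : IsDecProb t) :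
    IsDecProb (partSumInf s t) :=
  ⟨ofPartSums_nonneg ((partSum_mono hs.1).inf (partSum_mono ht.1)),
    antitone_ofPartSums (antitone_succ_sub_inf hs.antitone_partSum_succ_sub
      ht.antitone_partSum_succ_sub),
    by simp [partSumInf, sum_ofPartSums, partSum_of_le _ le_rfl, hs.2.2, ht.2.2]⟩

lemma partSumSup_nonneg {s t : Fin N → ℝ} (hs : ∀ i, 0 ≤ s i) (ht : ∀ i, 0 ≤ t i) (i : Fin N) :
    0 ≤ partSumSup s t i :=
  ofPartSums_nonneg ((partSum_mono hs).sup (partSum_mono ht)) i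

lemma sum_partSumSup {s t : Fin N → ℝ} (hs : IsDecProb s) (ht : IsDecProb t) :
    ∑ i, partSumSup s t i = 1 := by
  simp [partSumSup, sum_ofPartSums, partSum_of_le _ le_rfl, hs.2.2, ht.2.2]

end

theorem maj_dist_triangle_general {N : ℕ} (p q r spq spr srq : Fin N → ℝ)
    (hr : IsDecProb r)
    (hspq : IsSup spq p q) (hspr : IsSup spr p r) (hsrq : IsSup srq r q) :
    (H p + H r - 2 * H spr) + (H r + H q - 2 * H srq) ≥ H p + H q - 2 * H spq := by
  have hmeet : H (partSumInf spr srq) ≤ H r := by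
    have hdec := isDecProb_partSumInf hspr.1 hsrq.1
    exact hr.H_le_of_maj hdec.1 hdec.2.2 (maj_partSumInf hspr.2.2.1 hsrq.2.1)
  set join := partSumSup spr srq
  obtain ⟨σ, hσ⟩ := exists_antitone_comp_perm join
  have hsorted : IsDecProb (join ∘ σ) :=
    isDecProb_comp_perm (partSumSup_nonneg hspr.1.1 hsrq.1.1) (sum_partSumSup hspr.1 hsrq.1) hσ
  have hjoin : H join ≤ H spq := by
    have hmaj : Maj spq (join ∘ σ) := hspq.2.2.2 _ hsorted
      ((hspr.2.1.trans (maj_partSumSup_left _ _)).trans (maj_comp_perm_of_antitone _ hσ))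
      ((hsrq.2.2.1.trans (maj_partSumSup_right _ _)).trans (maj_comp_perm_of_antitone _ hσ))
    rw [← H_comp_perm join σ]
    exact hspq.1.H_le_of_maj hsorted.1 hsorted.2.2 hmaj
  linarith [H_add_H_le hspr.1.1 hsrq.1.1]

/-- Triangle inequality for d(p,q) = H(p) + H(q) − 2H(p ∨ q):
d(p,r) + d(r,q) ≥ d(p,q). -/
theorem maj_dist_triangle {N : ℕ} (p q r spq spr srq : Fin N → ℝ)
    (hp : IsDecProb p) (hq : IsDecProb q) (hr : IsDecProb r)
    (hspq : IsSup spq p q) (hspr : IsSup spr p r) (hsrq : IsSup srq r q) :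
    (H p + H r - 2 * H spr) + (H r + H q - 2 * H srq) ≥ H p + H q - 2 * H spq :=
  maj_dist_triangle_general p q r spq spr srq hr hspq hspr hsrq
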